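/- If I is a fusion-closed set of words and h ∈ S_I := ⋃_{w ∈ I} P(w), then the word [h] · \overline{[h]} (the reduced word of h concatenated with its reverse-inverse) belongs to I. -/
import Mathlib


/-- Evaluation map `π`: a word (list of letters `(j, ε)` with `ε : Bool` meaning `+1`/`-1`)
is sent to `a_{j₁}^{ε₁} ⋯ a_{j_k}^{ε_k}` in the free group `F_n`. -/
def evalWord (n : ℕ) (w : List (Fin n × Bool)) : FreeGroup (Fin n) :=
  (w.map fun p => if p.2 then FreeGroup.of p.1 else (FreeGroup.of p.1)⁻¹).prod

/-- The reverse-inverse `w̄` of a word `w`. -/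
def barWord {n : ℕ} (w : List (Fin n × Bool)) : List (Fin n × Bool) :=
  (w.map fun p => (p.1, !p.2)).reverse

/-- The prefix set `P(w)` of a word `w`: evaluations of all initial segments of `w`. -/
def prefixSet (n : ℕ) (w : List (Fin n × Bool)) : Set (FreeGroup (Fin n)) :=
  {g | ∃ p, p <+: w ∧ evalWord n p = g}

/-- The Cayley graph of `F_n`: `g` and `h` are adjacent iff `g⁻¹ * h ∈ {a_j^{±1}}`. -/
def cayley (n : ℕ) : SimpleGraph (FreeGroup (Fin n)) :=
  SimpleGraph.fromRel (fun g h => ∃ j : Fin n, g⁻¹ * h = FreeGroup.of j)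

/-- A set of words is fusion-closed if it contains the empty word, is closed under
reverse-inverse, and `x·s ∈ I`, `s̄·y ∈ I` imply `x·y ∈ I`. -/
def FusionClosed (n : ℕ) (I : Set (List (Fin n × Bool))) : Prop :=
  ([] ∈ I) ∧ (∀ w ∈ I, barWord w ∈ I) ∧
    ∀ x s y : List (Fin n × Bool), x ++ s ∈ I → barWord s ++ y ∈ I → x ++ y ∈ I

/-- `I(Γ,S)`: the set of words `w` with `π(w) ∈ Γ` and `P(w) ⊆ S`. -/
def Iset (n : ℕ) (Γ S : Set (FreeGroup (Fin n))) : Set (List (Fin n × Bool)) :=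
  {w | evalWord n w ∈ Γ ∧ prefixSet n w ⊆ S}

theorem barWord_append {n : ℕ} (x y : List (Fin n × Bool)) :
    barWord (x ++ y) = barWord y ++ barWord x := by
  simp [barWord]

theorem barWord_barWord {n : ℕ} (w : List (Fin n × Bool)) :
    barWord (barWord w) = w := by
  simp [barWord, List.map_map, Function.comp_def, Bool.not_not]

theorem evalWord_eq_mk (n : ℕ) (w : List (Fin n × Bool)) :
    evalWord n w = FreeGroup.mk w := by
  induction w with
  | nil => rfl
  | cons c t ih =>
    have : FreeGroup.mk (c :: t) = FreeGroup.mk [c] * FreeGroup.mk t := by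
      rw [FreeGroup.mul_mk]; rfl
    rw [this, ← ih]
    rcases c with ⟨j, b⟩
    cases b with
    | true =>
      simp [evalWord, FreeGroup.of]
    | false =>
      have h1 : FreeGroup.mk [((j : Fin n), false)] = (FreeGroup.of j)⁻¹ := by
        rw [FreeGroup.of, FreeGroup.inv_mk]; rfl
      simp [evalWord, h1]

/-- Any prefix `p` of a word in `I` gives `p ++ p̄ ∈ I`. -/
theorem prefix_pp {n : ℕ} {I : Set (List (Fin n × Bool))} (hI : FusionClosed n I)
    {w p : List (Fin n × Bool)} (hw : w ∈ I) (hp : p <+: w) :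
    p ++ barWord p ∈ I := by
  obtain ⟨t, rfl⟩ := hp
  refine hI.2.2 p t (barWord p) hw ?_
  have := hI.2.1 _ hw
  rwa [barWord_append] at this

/-- The property `p ++ p̄ ∈ I` is preserved under one-step free reduction. -/
theorem step_pp {n : ℕ} {I : Set (List (Fin n × Bool))} (hI : FusionClosed n I)
    {p q : List (Fin n × Bool)} (hs : FreeGroup.Red.Step p q)
    (hp : p ++ barWord p ∈ I) : q ++ barWord q ∈ I := by
  cases hs with
  | @not x y j b =>
  -- p = x ++ (j,b) :: (j,!b) :: y, q = x ++ y
  set c1 : Fin n × Bool := (j, b)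
  set c2 : Fin n × Bool := (j, !b)
  have hpair : barWord [c1, c2] = [c1, c2] := by
    simp [barWord, c1, c2, Bool.not_not]
  -- A := x ++ [c1] is a prefix of p ++ barWord p
  have hA : (x ++ [c1]) ++ barWord (x ++ [c1]) ∈ I := by
    refine prefix_pp hI hp ⟨c2 :: y ++ barWord (x ++ c1 :: c2 :: y), ?_⟩
    simp [c1, c2]
  -- rewrite A ++ bar A = x ++ ([c1,c2] ++ barWord x)
  have hA' : x ++ ([c1, c2] ++ barWord x) ∈ I := by
    have e : (x ++ [c1]) ++ barWord (x ++ [c1]) = x ++ ([c1, c2] ++ barWord x) := by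
      rw [barWord_append]
      simp [barWord, c1, c2]
    rwa [e] at hA
  have hbarS : barWord ([c1, c2] ++ barWord x) = x ++ [c1, c2] := by
    rw [barWord_append, barWord_barWord, hpair]
  -- first fusion: W = p ++ bar p = (x ++ [c1,c2]) ++ (y ++ bar y ++ [c1,c2] ++ bar x)
  have hW : barWord ([c1, c2] ++ barWord x) ++ (y ++ (barWord y ++ ([c1, c2] ++ barWord x))) ∈ I := by
    rw [hbarS]
    have e : (x ++ c1 :: c2 :: y) ++ barWord (x ++ c1 :: c2 :: y)
        = x ++ [c1, c2] ++ (y ++ (barWord y ++ ([c1, c2] ++ barWord x))) := by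
      have : (c1 :: c2 :: y) = [c1,c2] ++ y := rfl
      rw [this, barWord_append, barWord_append, hpair]
      simp
    rwa [e] at hp
  have hW2 : x ++ (y ++ (barWord y ++ ([c1, c2] ++ barWord x))) ∈ I :=
    hI.2.2 x ([c1, c2] ++ barWord x) _ hA' hW
  -- second fusion: bar W2 = (x ++ [c1,c2]) ++ (y ++ bar y ++ bar x)
  have hbarW2 : barWord ([c1, c2] ++ barWord x) ++ (y ++ (barWord y ++ barWord x)) ∈ I := by
    have := hI.2.1 _ hW2
    rw [hbarS]
    have e : barWord (x ++ (y ++ (barWord y ++ ([c1, c2] ++ barWord x))))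
        = x ++ [c1, c2] ++ (y ++ (barWord y ++ barWord x)) := by
      simp only [barWord_append, barWord_barWord, hpair]
      simp
    rwa [e] at this
  have := hI.2.2 x ([c1, c2] ++ barWord x) _ hA' hbarW2
  have e : x ++ (y ++ (barWord y ++ barWord x)) = (x ++ y) ++ barWord (x ++ y) := by
    rw [barWord_append]; simp
  rwa [e] at this

theorem red_pp {n : ℕ} {I : Set (List (Fin n × Bool))} (hI : FusionClosed n I)
    {p q : List (Fin n × Bool)} (hr : FreeGroup.Red p q)
    (hp : p ++ barWord p ∈ I) : q ++ barWord q ∈ I := by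
  induction hr with
  | refl => exact hp
  | tail _ hstep ih => exact step_pp hI hstep ih

/-- If `I` is fusion-closed and `h ∈ S_I = ⋃_{w ∈ I} P(w)`, then the word
`[h] · \overline{[h]}` belongs to `I`. -/
theorem stmt_11 (n : ℕ) (hn : 1 ≤ n) (I : Set (List (Fin n × Bool)))
    (hI : FusionClosed n I) (h : FreeGroup (Fin n))
    (hh : h ∈ ⋃ w ∈ I, prefixSet n w) :
    FreeGroup.toWord h ++ barWord (FreeGroup.toWord h) ∈ I := by
  obtain ⟨w, hw, p, hpw, hpe⟩ := Set.mem_iUnion₂.1 hh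
  have hpp : p ++ barWord p ∈ I := prefix_pp hI hw hpw
  have hto : FreeGroup.toWord h = FreeGroup.reduce p := by
    rw [← hpe, evalWord_eq_mk, FreeGroup.toWord_mk]
  rw [hto]
  exact red_pp hI FreeGroup.reduce.red hpp
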